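/- Let (α1,β1,γ1,δ1) and (α2,β2,γ2,δ2) be elements of (K^*)^3 × K. Then V'_1(α1,β1,γ1,δ1) is isomorphic to V'_1(α2,β2,γ2,δ2) as right U_q^+(B_2)-modules if and only if there exists an integer p with 0 ≤ p ≤ l-1 such that α1^l = α2^l, β1 = q^{-2p} β2, γ1 = γ2, and δ1 = δ2 + ((1-q^{-4p})/(1-q^{-4})) β2^2. -/

import Mathlib

/-!
Both modules are weight modules for `e3`: the basis vector `v_k` has weight `q^{-2k} β`, and
these `l` weights are pairwise distinct. An isomorphism therefore sends every `v_k` to a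
nonzero multiple `c_k v_{k+p}`, with one shift `p`, and `β1 = q^{-2p} β2`. On such a map the
action of `e1` reads `α1 c_{k+1} = α2 c_k`, which forces `α1^l = α2^l`; `z` gives `γ1 = γ2`;
and `e2` gives equality of `δ + β^2/(1 - q^{-4})`, which is the stated relation between `δ1` and
`δ2`. Conversely, `c_k = (α2/α1)^k` and the shift `p` define an isomorphism, and it suffices
to check it on generators of `U_q^+(B_2)` and basis vectors.
-/

noncomputable section

open MulOpposite

/-- The defining relations of `U_q^+(B_2)` on the free algebra on generators
`e1 = ι 0`, `e2 = ι 1`, `e3 = ι 2`, `z = ι 3`. -/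
inductive UqB2Rel (K : Type*) [Field K] (q : K) :
    FreeAlgebra K (Fin 4) → FreeAlgebra K (Fin 4) → Prop
  | e1z : UqB2Rel K q (FreeAlgebra.ι K 0 * FreeAlgebra.ι K 3)
      (FreeAlgebra.ι K 3 * FreeAlgebra.ι K 0)
  | e2z : UqB2Rel K q (FreeAlgebra.ι K 1 * FreeAlgebra.ι K 3)
      (FreeAlgebra.ι K 3 * FreeAlgebra.ι K 1)
  | e3z : UqB2Rel K q (FreeAlgebra.ι K 2 * FreeAlgebra.ι K 3)
      (FreeAlgebra.ι K 3 * FreeAlgebra.ι K 2)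
  | e1e3 : UqB2Rel K q (FreeAlgebra.ι K 0 * FreeAlgebra.ι K 2)
      (q⁻¹ ^ 2 • (FreeAlgebra.ι K 2 * FreeAlgebra.ι K 0))
  | e2e3 : UqB2Rel K q (FreeAlgebra.ι K 1 * FreeAlgebra.ι K 2)
      (q ^ 2 • (FreeAlgebra.ι K 2 * FreeAlgebra.ι K 1) + FreeAlgebra.ι K 3)
  | e2e1 : UqB2Rel K q (FreeAlgebra.ι K 1 * FreeAlgebra.ι K 0)
      (q⁻¹ ^ 2 • (FreeAlgebra.ι K 0 * FreeAlgebra.ι K 1) - q⁻¹ ^ 2 • FreeAlgebra.ι K 2)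

/-- `U_q^+(B_2)`, presented by generators `e1, e2, e3, z` and the relations above. -/
abbrev UqB2 (K : Type*) [Field K] (q : K) : Type _ := RingQuot (UqB2Rel K q)

variable (K : Type*) [Field K] (q : K)

/-- The generator `e1` of `U_q^+(B_2)`. -/
def Ue1 : UqB2 K q := RingQuot.mkAlgHom K (UqB2Rel K q) (FreeAlgebra.ι K 0)
/-- The generator `e2` of `U_q^+(B_2)`. -/
def Ue2 : UqB2 K q := RingQuot.mkAlgHom K (UqB2Rel K q) (FreeAlgebra.ι K 1)
/-- The generator `e3` of `U_q^+(B_2)`. -/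
def Ue3 : UqB2 K q := RingQuot.mkAlgHom K (UqB2Rel K q) (FreeAlgebra.ι K 2)
/-- The generator `z` of `U_q^+(B_2)`. -/
def Uz : UqB2 K q := RingQuot.mkAlgHom K (UqB2Rel K q) (FreeAlgebra.ι K 3)


/-- A right `U_q^+(B_2)`-module structure `ρ` on the `K`-vector space with basis
`v_0, …, v_{l-1}` realizes `V'_1(α,β,γ,δ)` if the generators act on the basis by the
defining formulas of `V'_1(α,β,γ,δ)`. -/
def IsV1Rep (l : ℕ) (α β γ δ : K)
    (ρ : UqB2 K q →ₐ[K] (Module.End K (Fin l → K))ᵐᵒᵖ) : Prop :=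
  (∀ k : Fin l, (ρ (Ue1 K q)).unop (Pi.single k 1) =
    α • (Pi.single (finRotate l k) 1 : Fin l → K)) ∧
  (∀ k : Fin l, (ρ (Ue2 K q)).unop (Pi.single k 1) =
    (α⁻¹ * (δ + ((1 - q⁻¹ ^ (4 * (k : ℕ))) / (1 - q⁻¹ ^ 4)) * β ^ 2) *
        (q ^ (2 * (k : ℕ)) * q⁻¹ ^ 2) * β⁻¹) •
        (Pi.single ((finRotate l).symm k) 1 : Fin l → K) -
      (γ / (q ^ 2 - 1) * q ^ (2 * (k : ℕ)) * β⁻¹) • (Pi.single k 1 : Fin l → K)) ∧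
  (∀ k : Fin l, (ρ (Ue3 K q)).unop (Pi.single k 1) =
    (q⁻¹ ^ (2 * (k : ℕ)) * β) • (Pi.single k 1 : Fin l → K)) ∧
  (∀ k : Fin l, (ρ (Uz K q)).unop (Pi.single k 1) = γ • (Pi.single k 1 : Fin l → K))

variable {K q}

open scoped Fin.CommRing

theorem pow_val_add_of_pow_eq_one {M : Type*} [Monoid M] {t : M} {l : ℕ} (ht : t ^ l = 1)
    (a b : Fin l) : t ^ ((a + b : Fin l) : ℕ) = t ^ (a : ℕ) * t ^ (b : ℕ) := by
  rw [Fin.val_add, ← pow_eq_pow_mod _ ht, pow_add]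

theorem pow_val_one_of_pow_eq_one {M : Type*} [Monoid M] {t : M} {l : ℕ} [NeZero l]
    (ht : t ^ l = 1) : t ^ ((1 : Fin l) : ℕ) = t := by
  rw [Fin.val_one', ← pow_eq_pow_mod _ ht, pow_one]

theorem pow_card_eq_of_mul_comp_add {G M : Type*} [Fintype G] [AddGroup G]
    [CommRing M] [IsDomain M] {a b : M} {c : G → M} (hc : ∀ g, c g ≠ 0) (g₀ : G)
    (h : ∀ g, a * c (g + g₀) = b * c g) : a ^ Fintype.card G = b ^ Fintype.card G := by
  have hprod : ∏ g, c (g + g₀) = ∏ g, c g := _root_.Equiv.prod_comp (Equiv.addRight g₀) c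
  refine mul_right_cancel₀ (Finset.prod_ne_zero_iff.mpr fun g _ => hc g : ∏ g, c g ≠ 0) ?_
  calc a ^ Fintype.card G * ∏ g, c g = ∏ g, a * c (g + g₀) := by
        rw [Finset.prod_mul_distrib, Finset.prod_const, Finset.card_univ, hprod]
    _ = ∏ g, b * c g := Finset.prod_congr rfl fun g _ => h g
    _ = b ^ Fintype.card G * ∏ g, c g := by
        rw [Finset.prod_mul_distrib, Finset.prod_const, Finset.card_univ]

theorem IsPrimitiveRoot.inv_sq_of_eq_ite {M : Type*} [DivisionCommMonoid M] {ζ : M} {m l : ℕ}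
    (hζ : IsPrimitiveRoot ζ m) (hm : 0 < m) (hl : l = if Odd m then m else m / 2) :
    IsPrimitiveRoot (ζ⁻¹ ^ 2) l := by
  rw [inv_pow]
  refine IsPrimitiveRoot.inv ?_
  split_ifs at hl with h <;> subst hl
  · exact hζ.pow_of_coprime 2 (Nat.coprime_two_left.mpr h)
  · exact hζ.pow hm (Nat.two_mul_div_two_of_even (Nat.not_odd_iff_even.mp h)).symm

section Intertwiners

variable {R A M N : Type*} [CommSemiring R] [Semiring A] [Algebra R A]
  [AddCommMonoid M] [Module R M] [AddCommMonoid N] [Module R N]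
  {ρ1 : A →ₐ[R] (Module.End R M)ᵐᵒᵖ} {ρ2 : A →ₐ[R] (Module.End R N)ᵐᵒᵖ}

theorem intertwines_of_adjoin_eq_top {s : Set A} (hs : Algebra.adjoin R s = ⊤) {f : M →ₗ[R] N}
    (h : ∀ a ∈ s, ∀ x, f ((ρ1 a).unop x) = (ρ2 a).unop (f x)) (u : A) (x : M) :
    f ((ρ1 u).unop x) = (ρ2 u).unop (f x) := by
  induction (hs ▸ Algebra.mem_top : u ∈ Algebra.adjoin R s) using Algebra.adjoin_induction
    generalizing x with
  | mem a ha => exact h a ha x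
  | algebraMap r => simp
  | add a b _ _ ha hb => simp [ha, hb]
  | mul a b _ _ ha hb => simp [ha, hb]

theorem intertwines_of_basis {ι : Type*} (b : Module.Basis ι R M) {s : Set A}
    (hs : Algebra.adjoin R s = ⊤) {f : M →ₗ[R] N}
    (h : ∀ a ∈ s, ∀ i, f ((ρ1 a).unop (b i)) = (ρ2 a).unop (f (b i))) (u : A) (x : M) :
    f ((ρ1 u).unop x) = (ρ2 u).unop (f x) :=
  intertwines_of_adjoin_eq_top hs (fun a ha =>
    LinearMap.congr_fun (b.ext (f₁ := f ∘ₗ (ρ1 a).unop) (f₂ := (ρ2 a).unop ∘ₗ f) (h a ha))) u x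

end Intertwiners

theorem UqB2.adjoin_generators_eq_top :
    Algebra.adjoin K {Ue1 K q, Ue2 K q, Ue3 K q, Uz K q} = ⊤ := by
  have hgen : ({Ue1 K q, Ue2 K q, Ue3 K q, Uz K q} : Set (UqB2 K q)) =
      RingQuot.mkAlgHom K (UqB2Rel K q) '' Set.range (FreeAlgebra.ι K) := by
    rw [← Set.range_comp]
    ext u
    simp only [Set.mem_insert_iff, Set.mem_singleton_iff, Set.mem_range, Fin.exists_fin_succ,
      Function.comp_apply, Fin.exists_fin_zero]
    simp [Ue1, Ue2, Ue3, Uz, eq_comm]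
  rw [hgen, ← AlgHom.map_adjoin, FreeAlgebra.adjoin_range_ι, Algebra.map_top,
    AlgHom.range_eq_top]
  exact RingQuot.mkAlgHom_surjective K _

section SingleVectors

variable {ι R : Type*} [DecidableEq ι]

theorem apply_eq_mul_of_single [CommSemiring R] [Fintype ι]
    {g : Module.End R (ι → R)} {d : ι → R}
    (h : ∀ i, g (Pi.single i 1) = d i • Pi.single i 1) (y : ι → R) : g y = d * y := by
  have hsingle : ∀ i, Pi.single i (y i) = y i • (Pi.single i 1 : ι → R) := fun i => by
    rw [← Pi.single_smul', smul_eq_mul, mul_one]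
  conv_lhs => rw [← Finset.univ_sum_single y]
  ext j
  simp [hsingle, h, Finset.sum_apply, Pi.single_apply, mul_comm]

theorem eq_smul_single_of_forall_ne_zero [Semiring R] {y : ι → R} {i : ι}
    (h : ∀ j, y j ≠ 0 → j = i) : y = y i • Pi.single i 1 := by
  ext j
  by_cases hj : j = i
  · simp [hj]
  · simp [hj, not_imp_comm.mp (h j) hj]

theorem smul_single_one_inj [Semiring R] {i : ι} {a b : R} :
    a • (Pi.single i 1 : ι → R) = b • Pi.single i 1 ↔ a = b := by
  rw [← Pi.single_smul', ← Pi.single_smul', smul_eq_mul, smul_eq_mul, mul_one, mul_one,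
    Pi.single_inj]

theorem smul_single_sub_smul_single_inj [Ring R] {i j : ι} (hij : i ≠ j) {a b a' b' : R} :
    a • (Pi.single i 1 : ι → R) - b • Pi.single j 1 = a' • Pi.single i 1 - b' • Pi.single j 1 ↔
      a = a' ∧ b = b' := by
  refine ⟨fun h => ⟨?_, ?_⟩, fun ⟨ha, hb⟩ => ha ▸ hb ▸ rfl⟩
  · simpa [hij] using congrFun h i
  · simpa [hij.symm] using congrFun h j

end SingleVectors

section Monomial

variable {G : Type*} [AddGroup G]

def monomialEquiv (c : G → K) (hc : ∀ g, c g ≠ 0) (p : G) : (G → K) ≃ₗ[K] (G → K) :=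
  (LinearEquiv.piCongrRight fun g => LinearEquiv.smulOfNeZero K K (c g) (hc g)).trans
    (LinearEquiv.funCongrLeft K K (Equiv.subRight p))

theorem monomialEquiv_single [DecidableEq G] (c : G → K) (hc : ∀ g, c g ≠ 0) (p k : G) :
    monomialEquiv c hc p (Pi.single k 1) = c k • Pi.single (k + p) 1 := by
  ext j
  by_cases hj : j = k + p
  · simp [monomialEquiv, hj, LinearMap.funLeft]
  · simp [monomialEquiv, hj, LinearMap.funLeft, sub_eq_iff_eq_add]

end Monomial

def v1Weight (q β : K) {l : ℕ} (k : Fin l) : K := q⁻¹ ^ (2 * (k : ℕ)) * β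

/-- Unchanged under `(β, δ) ↦ (q^{-2p} β, δ + ((1 - q^{-4p})/(1 - q^{-4})) β^2)`. -/
def v1Invariant (q β δ : K) : K := δ + β ^ 2 / (1 - q⁻¹ ^ 4)

/-- The coefficient of `v_{k-1}` in `v_k · e2`, written through the `e3`-weight `w` of `v_k`
and the invariant `ε`. -/
def v1LowerCoeff (q α ε w : K) : K := α⁻¹ * (ε - w ^ 2 / (1 - q⁻¹ ^ 4)) * q⁻¹ ^ 2 * w⁻¹

section Weights

variable {l : ℕ} {β : K}

theorem v1Weight_zero [NeZero l] : v1Weight q β (0 : Fin l) = β := by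
  simp [v1Weight]

theorem v1Weight_add (hq : (q⁻¹ ^ 2) ^ l = 1) (k p : Fin l) :
    v1Weight q β (k + p) = v1Weight q (v1Weight q β p) k := by
  simp only [v1Weight, pow_mul, pow_val_add_of_pow_eq_one hq]
  ring

theorem v1Weight_ne_zero (hq : q ≠ 0) (hβ : β ≠ 0) (k : Fin l) : v1Weight q β k ≠ 0 :=
  mul_ne_zero (pow_ne_zero _ (inv_ne_zero hq)) hβ

theorem v1Weight_injective (hr : IsPrimitiveRoot (q⁻¹ ^ 2) l) (hβ : β ≠ 0) :
    Function.Injective (v1Weight q β : Fin l → K) := fun i j h =>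
  Fin.ext (hr.pow_inj i.isLt j.isLt (by simpa [v1Weight, pow_mul, hβ] using h))

end Weights

theorem v1Invariant_eq_iff (β δ δ' : K) (n : ℕ) :
    v1Invariant q (q⁻¹ ^ (2 * n) * β) δ' = v1Invariant q β δ ↔
      δ' = δ + (1 - q⁻¹ ^ (4 * n)) / (1 - q⁻¹ ^ 4) * β ^ 2 := by
  unfold v1Invariant
  constructor <;> intro h <;> linear_combination h

theorem v1LowerCoeff_mul_eq_iff (hq : q ≠ 0) {α1 α2 ε1 ε2 w c c' : K} (hα1 : α1 ≠ 0)
    (hα2 : α2 ≠ 0) (hw : w ≠ 0) (hc' : c' ≠ 0) (hA : α1 * c = α2 * c') :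
    v1LowerCoeff q α1 ε1 w * c' = c * v1LowerCoeff q α2 ε2 w ↔ ε1 = ε2 := by
  obtain rfl : c = α2 * c' / α1 := by field_simp; linear_combination hA
  unfold v1LowerCoeff
  constructor
  · intro h
    field_simp at h
    linear_combination h
  · rintro rfl
    field_simp

namespace IsV1Rep

variable {l : ℕ} {α β γ δ : K} {ρ : UqB2 K q →ₐ[K] (Module.End K (Fin l → K))ᵐᵒᵖ}

theorem e1_single [NeZero l] (h : IsV1Rep K q l α β γ δ ρ) (k : Fin l) :
    (ρ (Ue1 K q)).unop (Pi.single k 1) = α • Pi.single (k + 1) 1 := by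
  rw [h.1 k, finRotate_apply]

theorem e2_single [NeZero l] (h : IsV1Rep K q l α β γ δ ρ) (k : Fin l) :
    (ρ (Ue2 K q)).unop (Pi.single k 1) =
      v1LowerCoeff q α (v1Invariant q β δ) (v1Weight q β k) • Pi.single (k - 1) 1 -
        (γ / (q ^ 2 - 1) * (v1Weight q β k)⁻¹) • Pi.single k 1 := by
  have hrot : (finRotate l).symm k = k - 1 :=
    (finRotate l).symm_apply_eq.mpr (by rw [finRotate_apply, sub_add_cancel])
  rw [h.2.1 k, hrot]
  congr 2 <;> simp only [v1LowerCoeff, v1Invariant, v1Weight, mul_inv, inv_pow, inv_inv] <;> ring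

theorem e3_single (h : IsV1Rep K q l α β γ δ ρ) (k : Fin l) :
    (ρ (Ue3 K q)).unop (Pi.single k 1) = v1Weight q β k • Pi.single k 1 :=
  h.2.2.1 k

theorem z_single (h : IsV1Rep K q l α β γ δ ρ) (k : Fin l) :
    (ρ (Uz K q)).unop (Pi.single k 1) = γ • Pi.single k 1 :=
  h.2.2.2 k

end IsV1Rep

section MonomialIntertwiners

variable {l : ℕ} {α1 β1 γ1 δ1 α2 β2 γ2 δ2 : K}
  {ρ1 ρ2 : UqB2 K q →ₐ[K] (Module.End K (Fin l → K))ᵐᵒᵖ}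
  {f : (Fin l → K) →ₗ[K] (Fin l → K)} {c : Fin l → K} {p : Fin l}

theorem IsV1Rep.e1_comm_iff [NeZero l] (h1 : IsV1Rep K q l α1 β1 γ1 δ1 ρ1)
    (h2 : IsV1Rep K q l α2 β2 γ2 δ2 ρ2) (hf : ∀ k, f (Pi.single k 1) = c k • Pi.single (k + p) 1)
    (k : Fin l) :
    f ((ρ1 (Ue1 K q)).unop (Pi.single k 1)) = (ρ2 (Ue1 K q)).unop (f (Pi.single k 1)) ↔
      α1 * c (k + 1) = α2 * c k := by
  rw [h1.e1_single, map_smul, hf, hf, map_smul, h2.e1_single, smul_smul, smul_smul,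
    add_right_comm, smul_single_one_inj, mul_comm (c k)]

theorem IsV1Rep.e2_comm_iff [NeZero l] (h1 : IsV1Rep K q l α1 β1 γ1 δ1 ρ1)
    (h2 : IsV1Rep K q l α2 β2 γ2 δ2 ρ2) (hf : ∀ k, f (Pi.single k 1) = c k • Pi.single (k + p) 1)
    (hl : (1 : Fin l) ≠ 0) (k : Fin l) :
    f ((ρ1 (Ue2 K q)).unop (Pi.single k 1)) = (ρ2 (Ue2 K q)).unop (f (Pi.single k 1)) ↔
      v1LowerCoeff q α1 (v1Invariant q β1 δ1) (v1Weight q β1 k) * c (k - 1) =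
          c k * v1LowerCoeff q α2 (v1Invariant q β2 δ2) (v1Weight q β2 (k + p)) ∧
        γ1 / (q ^ 2 - 1) * (v1Weight q β1 k)⁻¹ * c k =
          c k * (γ2 / (q ^ 2 - 1) * (v1Weight q β2 (k + p))⁻¹) := by
  rw [h1.e2_single, map_sub, map_smul, map_smul, hf, hf, map_smul, h2.e2_single, smul_sub,
    smul_smul, smul_smul, smul_smul, smul_smul, sub_add_eq_add_sub,
    smul_single_sub_smul_single_inj (sub_eq_self.not.mpr hl)]

theorem IsV1Rep.e3_comm_iff (h1 : IsV1Rep K q l α1 β1 γ1 δ1 ρ1)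
    (h2 : IsV1Rep K q l α2 β2 γ2 δ2 ρ2) (hf : ∀ k, f (Pi.single k 1) = c k • Pi.single (k + p) 1)
    {k : Fin l} (hc : c k ≠ 0) :
    f ((ρ1 (Ue3 K q)).unop (Pi.single k 1)) = (ρ2 (Ue3 K q)).unop (f (Pi.single k 1)) ↔
      v1Weight q β1 k = v1Weight q β2 (k + p) := by
  rw [h1.e3_single, map_smul, hf, map_smul, h2.e3_single, smul_smul, smul_smul,
    smul_single_one_inj, mul_comm (c k), mul_left_inj' hc]

theorem IsV1Rep.z_comm_iff (h1 : IsV1Rep K q l α1 β1 γ1 δ1 ρ1)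
    (h2 : IsV1Rep K q l α2 β2 γ2 δ2 ρ2) (hf : ∀ k, f (Pi.single k 1) = c k • Pi.single (k + p) 1)
    {k : Fin l} (hc : c k ≠ 0) :
    f ((ρ1 (Uz K q)).unop (Pi.single k 1)) = (ρ2 (Uz K q)).unop (f (Pi.single k 1)) ↔
      γ1 = γ2 := by
  rw [h1.z_single, map_smul, hf, map_smul, h2.z_single, smul_smul, smul_smul,
    smul_single_one_inj, mul_comm (c k), mul_left_inj' hc]

end MonomialIntertwiners

section Classification

variable {l : ℕ} {α1 β1 γ1 δ1 α2 β2 γ2 δ2 : K}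
  {ρ1 ρ2 : UqB2 K q →ₐ[K] (Module.End K (Fin l → K))ᵐᵒᵖ}

/-- `e3` acts diagonally with the pairwise distinct eigenvalues `q^{-2k} β`. -/
theorem IsV1Rep.exists_monomial_of_intertwines [NeZero l] (h1 : IsV1Rep K q l α1 β1 γ1 δ1 ρ1)
    (h2 : IsV1Rep K q l α2 β2 γ2 δ2 ρ2) (hr : IsPrimitiveRoot (q⁻¹ ^ 2) l) (hβ2 : β2 ≠ 0)
    (f : (Fin l → K) ≃ₗ[K] (Fin l → K))
    (hf : ∀ u x, f ((ρ1 u).unop x) = (ρ2 u).unop (f x)) :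
    ∃ (p : Fin l) (c : Fin l → K), (∀ k, c k ≠ 0) ∧
      ∀ k, f (Pi.single k 1) = c k • Pi.single (k + p) 1 := by
  have heigen : ∀ k j, v1Weight q β2 j * f (Pi.single k 1) j =
      v1Weight q β1 k * f (Pi.single k 1) j := fun k j => by
    simpa [h1.e3_single, apply_eq_mul_of_single h2.e3_single] using
      (congrFun (hf (Ue3 K q) (Pi.single k 1)) j).symm
  have hne : ∀ k, f (Pi.single k 1) ≠ 0 := fun k => by simp
  obtain ⟨p, hp⟩ := Function.ne_iff.mp (hne 0)
  have hβ1 : β1 = v1Weight q β2 p := by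
    simpa [v1Weight_zero] using (mul_right_cancel₀ hp (heigen 0 p)).symm
  have hsupp : ∀ k j, f (Pi.single k 1) j ≠ 0 → j = k + p := fun k j hj =>
    v1Weight_injective hr hβ2 (by
      rw [v1Weight_add hr.pow_eq_one, ← hβ1]
      exact mul_right_cancel₀ hj (heigen k j))
  refine ⟨p, fun k => f (Pi.single k 1) (k + p), fun k hk => hne k ?_,
    fun k => eq_smul_single_of_forall_ne_zero (hsupp k)⟩
  rw [eq_smul_single_of_forall_ne_zero (hsupp k), show f (Pi.single k 1) (k + p) = 0 from hk,
    zero_smul]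

theorem IsV1Rep.exists_shift_of_intertwines [NeZero l] (h1 : IsV1Rep K q l α1 β1 γ1 δ1 ρ1)
    (h2 : IsV1Rep K q l α2 β2 γ2 δ2 ρ2) (hr : IsPrimitiveRoot (q⁻¹ ^ 2) l) (hq : q ≠ 0)
    (hl : (1 : Fin l) ≠ 0) (hα1 : α1 ≠ 0) (hα2 : α2 ≠ 0) (hβ2 : β2 ≠ 0)
    (f : (Fin l → K) ≃ₗ[K] (Fin l → K))
    (hf : ∀ u x, f ((ρ1 u).unop x) = (ρ2 u).unop (f x)) :
    ∃ p : Fin l, α1 ^ l = α2 ^ l ∧ β1 = v1Weight q β2 p ∧ γ1 = γ2 ∧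
      v1Invariant q β1 δ1 = v1Invariant q β2 δ2 := by
  obtain ⟨p, c, hc, hfc⟩ := h1.exists_monomial_of_intertwines h2 hr hβ2 f hf
  have hA : ∀ k, α1 * c (k + 1) = α2 * c k := fun k =>
    (h1.e1_comm_iff h2 hfc k).mp (hf _ _)
  have hw : ∀ k, v1Weight q β1 k = v1Weight q β2 (k + p) := fun k =>
    (h1.e3_comm_iff h2 hfc (hc k)).mp (hf _ _)
  have hε : v1Invariant q β1 δ1 = v1Invariant q β2 δ2 := by
    have hC := ((h1.e2_comm_iff h2 hfc hl 0).mp (hf _ _)).1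
    rwa [hw, v1LowerCoeff_mul_eq_iff hq hα1 hα2 (v1Weight_ne_zero hq hβ2 _) (hc _)
      (by simpa using hA (0 - 1))] at hC
  exact ⟨p, by simpa using pow_card_eq_of_mul_comp_add hc 1 hA,
    by simpa [v1Weight_zero] using hw 0, (h1.z_comm_iff h2 hfc (hc 0)).mp (hf _ _), hε⟩

theorem IsV1Rep.intertwines_of_shift [NeZero l] (h1 : IsV1Rep K q l α1 β1 γ1 δ1 ρ1)
    (h2 : IsV1Rep K q l α2 β2 γ2 δ2 ρ2) (hr : (q⁻¹ ^ 2) ^ l = 1) (hq : q ≠ 0)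
    (hl : (1 : Fin l) ≠ 0) (hα1 : α1 ≠ 0) (hα2 : α2 ≠ 0) (hβ2 : β2 ≠ 0) (p : Fin l)
    (hα : α1 ^ l = α2 ^ l) (hβ : β1 = v1Weight q β2 p) (hγ : γ1 = γ2)
    (hε : v1Invariant q β1 δ1 = v1Invariant q β2 δ2) :
    ∃ f : (Fin l → K) ≃ₗ[K] (Fin l → K), ∀ u x, f ((ρ1 u).unop x) = (ρ2 u).unop (f x) := by
  have ht : (α2 / α1) ^ l = 1 := by rw [div_pow, hα, div_self (pow_ne_zero _ hα2)]
  set c : Fin l → K := fun k => (α2 / α1) ^ (k : ℕ)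
  have hc : ∀ k, c k ≠ 0 := fun k => pow_ne_zero _ (div_ne_zero hα2 hα1)
  have hA : ∀ k, α1 * c (k + 1) = α2 * c k := fun k => by
    simp only [c, pow_val_add_of_pow_eq_one ht, pow_val_one_of_pow_eq_one ht]
    field_simp
  have hw : ∀ k, v1Weight q β1 k = v1Weight q β2 (k + p) := fun k => by
    rw [v1Weight_add hr, ← hβ]
  have hfc := monomialEquiv_single c hc p
  refine ⟨monomialEquiv c hc p, intertwines_of_basis (Pi.basisFun K (Fin l))
    UqB2.adjoin_generators_eq_top ?_⟩
  simp only [Set.mem_insert_iff, Set.mem_singleton_iff, Pi.basisFun_apply]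
  rintro a (rfl | rfl | rfl | rfl) k
  · exact (h1.e1_comm_iff h2 hfc k).mpr (hA k)
  · refine (h1.e2_comm_iff h2 hfc hl k).mpr ⟨?_, by rw [hw, hγ, mul_comm]⟩
    rw [hw, v1LowerCoeff_mul_eq_iff hq hα1 hα2 (v1Weight_ne_zero hq hβ2 _) (hc _)
      (by simpa using hA (k - 1))]
    exact hε
  · exact (h1.e3_comm_iff h2 hfc (hc k)).mpr (hw k)
  · exact (h1.z_comm_iff h2 hfc (hc k)).mpr hγ

end Classification

theorem stmt17 (m : ℕ) (hm : 5 ≤ m) (hq : IsPrimitiveRoot q m)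
    (l : ℕ) (hl : l = if Odd m then m else m / 2)
    (α1 β1 γ1 δ1 α2 β2 γ2 δ2 : K)
    (hα1 : α1 ≠ 0) (hα2 : α2 ≠ 0) (hβ2 : β2 ≠ 0)
    (ρ1 ρ2 : UqB2 K q →ₐ[K] (Module.End K (Fin l → K))ᵐᵒᵖ)
    (h1 : IsV1Rep K q l α1 β1 γ1 δ1 ρ1) (h2 : IsV1Rep K q l α2 β2 γ2 δ2 ρ2) :
    (∃ f : (Fin l → K) ≃ₗ[K] (Fin l → K),
        ∀ u : UqB2 K q, ∀ x : Fin l → K, f ((ρ1 u).unop x) = (ρ2 u).unop (f x)) ↔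
      ∃ p : ℕ, p ≤ l - 1 ∧ α1 ^ l = α2 ^ l ∧ β1 = q⁻¹ ^ (2 * p) * β2 ∧ γ1 = γ2 ∧
        δ1 = δ2 + ((1 - q⁻¹ ^ (4 * p)) / (1 - q⁻¹ ^ 4)) * β2 ^ 2 := by
  have hq0 : q ≠ 0 := hq.ne_zero (by omega)
  have hr : IsPrimitiveRoot (q⁻¹ ^ 2) l := hq.inv_sq_of_eq_ite (by omega) hl
  have hl2 : 2 ≤ l := by split_ifs at hl <;> omega
  have : NeZero l := ⟨by omega⟩
  have hl1 : (1 : Fin l) ≠ 0 := by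
    rw [Ne, Fin.ext_iff, Fin.val_one', Nat.mod_eq_of_lt hl2]
    simp
  constructor
  · rintro ⟨f, hf⟩
    obtain ⟨p, hα, hβ, hγ, hε⟩ := h1.exists_shift_of_intertwines h2 hr hq0 hl1 hα1 hα2 hβ2 f hf
    rw [hβ] at hε
    exact ⟨p, by omega, hα, hβ, hγ, (v1Invariant_eq_iff β2 δ2 δ1 p).mp hε⟩
  · rintro ⟨p, hp, hα, hβ, hγ, hδ⟩
    refine h1.intertwines_of_shift h2 hr.pow_eq_one hq0 hl1 hα1 hα2 hβ2 ⟨p, by omega⟩ hα hβ hγ ?_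
    rw [hβ]
    exact (v1Invariant_eq_iff β2 δ2 δ1 p).mpr hδ
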